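/- arXiv:1810.02960 — 4 statements merged into one kernel-verified Lean document; each statement's English description precedes it below -/
import Mathlib

section
/- Let Q be a symmetric bilinear form on a finite-dimensional real vector space V2, let A : V2 → ℝⁿ be a linear map, let N ⊆ ℝⁿ be a subspace, and let V1 ⊆ V2 be a subspace. Write V_i^N = V_i ∩ A⁻¹(N) for i = 1, 2, and let N^⊥ ⊆ (ℝⁿ)* denote the annihilator of N. Then {v ∈ V2^N : Q(v, w) = 0 for all w ∈ V1^N} = {v ∈ V2^N : there exists ξ ∈ N^⊥ with ξ(A w) + Q(v, w) = 0 for all w ∈ V1}; i.e., the Q-orthogonal complement of V1^N inside V2^N consists exactly of those v ∈ V2^N for which a Lagrange multiplier ξ annihilating N exists for the equation ξ(A w) + Q(v, w) = 0 tested against all w ∈ V1. -/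
open Module Submodule

/-!
Both sides consist of the `v ∈ A⁻¹(N)` for which the functional `-Q v` on `V1` vanishes on
`V1 ∩ A⁻¹(N)`, the kernel of `V1 → ℝⁿ → ℝⁿ/N`. A functional vanishing on the kernel of a
linear map factors through it, so `-Q v = ψ ∘ (A mod N)` on `V1`, and `ξ := ψ ∘ mkQ` is the
Lagrange multiplier.
-/

namespace LinearMap

variable {K V W : Type*} [Field K] [AddCommGroup V] [Module K V] [AddCommGroup W] [Module K W]

theorem exists_dual_comp_eq_of_ker_le (f : V →ₗ[K] W) {φ : Dual K V} (h : ker f ≤ ker φ) :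
    ∃ ξ : Dual K W, ξ ∘ₗ f = φ := by
  have hφ : φ ∈ range f.dualMap := by
    rw [range_dualMap_eq_dualAnnihilator_ker, mem_dualAnnihilator]
    exact fun v hv => h hv
  exact hφ

theorem exists_dual_comp_eq_of_comap_le_ker (f : V →ₗ[K] W) (N : Submodule K W)
    {φ : Dual K V} (h : N.comap f ≤ ker φ) :
    ∃ ξ ∈ N.dualAnnihilator, ξ ∘ₗ f = φ := by
  have hker : ker (N.mkQ ∘ₗ f) ≤ ker φ := by
    rwa [ker_comp, ker_mkQ]
  obtain ⟨ψ, hψ⟩ := exists_dual_comp_eq_of_ker_le (N.mkQ ∘ₗ f) hker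
  refine ⟨ψ ∘ₗ N.mkQ, ?_, hψ⟩
  rw [mem_dualAnnihilator]
  intro x hx
  simp [(Quotient.mk_eq_zero N).mpr hx]

end LinearMap

theorem stmt_4_general {V2 : Type*} [AddCommGroup V2] [Module ℝ V2]
    {n : ℕ} (Q : V2 →ₗ[ℝ] V2 →ₗ[ℝ] ℝ)
    (A : V2 →ₗ[ℝ] (Fin n → ℝ)) (N : Submodule ℝ (Fin n → ℝ)) (V1 : Submodule ℝ V2) :
    {v : V2 | v ∈ Submodule.comap A N ∧ ∀ w ∈ V1 ⊓ Submodule.comap A N, Q v w = 0} =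
    {v : V2 | v ∈ Submodule.comap A N ∧ ∃ ξ : Module.Dual ℝ (Fin n → ℝ),
      (∀ x ∈ N, ξ x = 0) ∧ ∀ w ∈ V1, ξ (A w) + Q v w = 0} := by
  ext v
  simp only [Set.mem_ofPred_eq, and_congr_right_iff]
  intro _
  constructor
  · intro horth
    have hker : N.comap (A ∘ₗ V1.subtype) ≤ LinearMap.ker (-(Q v ∘ₗ V1.subtype)) :=
      fun w hw => by simpa using horth w ⟨w.2, hw⟩
    obtain ⟨ξ, hξN, hξ⟩ := LinearMap.exists_dual_comp_eq_of_comap_le_ker _ N hker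
    refine ⟨ξ, (mem_dualAnnihilator ξ).mp hξN, fun w hw => ?_⟩
    simpa [eq_neg_iff_add_eq_zero] using LinearMap.congr_fun hξ ⟨w, hw⟩
  · rintro ⟨ξ, hξN, hξ⟩ w ⟨hw1, hw2⟩
    simpa [hξN _ hw2] using hξ w hw1

theorem stmt_4 {V2 : Type*} [AddCommGroup V2] [Module ℝ V2] [FiniteDimensional ℝ V2]
    {n : ℕ} (Q : V2 →ₗ[ℝ] V2 →ₗ[ℝ] ℝ) (hQ : ∀ x y : V2, Q x y = Q y x)
    (A : V2 →ₗ[ℝ] (Fin n → ℝ)) (N : Submodule ℝ (Fin n → ℝ)) (V1 : Submodule ℝ V2) :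
    {v : V2 | v ∈ Submodule.comap A N ∧ ∀ w ∈ V1 ⊓ Submodule.comap A N, Q v w = 0} =
    {v : V2 | v ∈ Submodule.comap A N ∧ ∃ ξ : Module.Dual ℝ (Fin n → ℝ),
      (∀ x ∈ N, ξ x = 0) ∧ ∀ w ∈ V1, ξ (A w) + Q v w = 0} :=
  stmt_4_general Q A N V1
end

section
/- Let Q be a symmetric bilinear form on a finite-dimensional real vector space V2, let A : V2 → ℝⁿ be a linear map, let N ⊆ ℝⁿ be a subspace, and let V1 ⊆ V2 be a subspace. Write V_i^N = V_i ∩ A⁻¹(N) for i = 1, 2, and let N^⊥ ⊆ (ℝⁿ)* denote the annihilator of N. Then {v ∈ V1^N : Q(v, w) = 0 for all w ∈ V2^N} = {v ∈ V1^N : there exists ξ ∈ N^⊥ with ξ(A w) + Q(v, w) = 0 for all w ∈ V2}. -/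
open Module Submodule

theorem Submodule.dualAnnihilator_comap {K V W : Type*} [Field K] [AddCommGroup V] [Module K V]
    [AddCommGroup W] [Module K W] (A : V →ₗ[K] W) (N : Submodule K W) :
    (N.comap A).dualAnnihilator = N.dualAnnihilator.map A.dualMap := by
  have hker : N.comap A = LinearMap.ker (N.mkQ ∘ₗ A) := by
    rw [LinearMap.ker_comp, ker_mkQ]
  rw [hker, ← LinearMap.range_dualMap_eq_dualAnnihilator_ker, ← LinearMap.dualMap_comp_dualMap,
    LinearMap.range_comp, range_dualMap_mkQ_eq]

theorem stmt_5_general {V2 : Type*} [AddCommGroup V2] [Module ℝ V2]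
    {n : ℕ} (Q : V2 →ₗ[ℝ] V2 →ₗ[ℝ] ℝ)
    (A : V2 →ₗ[ℝ] (Fin n → ℝ)) (N : Submodule ℝ (Fin n → ℝ)) (V1 : Submodule ℝ V2) :
    {v : V2 | v ∈ V1 ⊓ Submodule.comap A N ∧ ∀ w ∈ Submodule.comap A N, Q v w = 0} =
    {v : V2 | v ∈ V1 ⊓ Submodule.comap A N ∧ ∃ ξ : Module.Dual ℝ (Fin n → ℝ),
      (∀ x ∈ N, ξ x = 0) ∧ ∀ w : V2, ξ (A w) + Q v w = 0} := by
  ext v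
  refine and_congr_right fun _ => ?_
  rw [← mem_dualAnnihilator, ← neg_mem_iff, dualAnnihilator_comap]
  simp only [mem_map, mem_dualAnnihilator, eq_neg_iff_add_eq_zero, LinearMap.ext_iff,
    LinearMap.add_apply, LinearMap.dualMap_apply, LinearMap.zero_apply]

theorem stmt_5 {V2 : Type*} [AddCommGroup V2] [Module ℝ V2] [FiniteDimensional ℝ V2]
    {n : ℕ} (Q : V2 →ₗ[ℝ] V2 →ₗ[ℝ] ℝ) (hQ : ∀ x y : V2, Q x y = Q y x)
    (A : V2 →ₗ[ℝ] (Fin n → ℝ)) (N : Submodule ℝ (Fin n → ℝ)) (V1 : Submodule ℝ V2) :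
    {v : V2 | v ∈ V1 ⊓ Submodule.comap A N ∧ ∀ w ∈ Submodule.comap A N, Q v w = 0} =
    {v : V2 | v ∈ V1 ⊓ Submodule.comap A N ∧ ∃ ξ : Module.Dual ℝ (Fin n → ℝ),
      (∀ x ∈ N, ξ x = 0) ∧ ∀ w : V2, ξ (A w) + Q v w = 0} :=
  stmt_5_general Q A N V1
end

section
/- Let Λ1, Π, Λ2 be Lagrangian subspaces of a symplectic vector space Σ and let Γ ⊆ Λ1 ∩ Λ2 be a subspace (necessarily isotropic). Then Π^Γ := (Π ∩ Γ^∠) + Γ is a Lagrangian subspace of Σ and ind_Π(Λ1, Λ2) = ind_{Π^Γ}(Λ1, Λ2). -/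
open Module Submodule

/-- The skew-orthogonal complement (with respect to a bilinear form `σ`)
of a subspace `Γ`: all vectors `x` with `σ x y = 0` for all `y ∈ Γ`. -/
def skewCompl {E : Type*} [AddCommGroup E] [Module ℝ E]
    (σ : E →ₗ[ℝ] E →ₗ[ℝ] ℝ) (Γ : Submodule ℝ E) : Submodule ℝ E where
  carrier := {x | ∀ y ∈ Γ, σ x y = 0}
  zero_mem' := by intro y hy; simp
  add_mem' := by
    intro a b ha hb y hy
    have h1 := ha y hy
    have h2 := hb y hy
    simp only [map_add, LinearMap.add_apply]
    rw [h1, h2, add_zero]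
  smul_mem' := by
    intro c a ha y hy
    have h1 := ha y hy
    simp only [map_smul, LinearMap.smul_apply, smul_eq_mul]
    rw [h1, mul_zero]

/-- A subspace is Lagrangian if it coincides with its skew-orthogonal complement. -/
def IsLagrangian {E : Type*} [AddCommGroup E] [Module ℝ E]
    (σ : E →ₗ[ℝ] E →ₗ[ℝ] ℝ) (Λ : Submodule ℝ E) : Prop :=
  Λ = skewCompl σ Λ

/-- The positive inertia index of the quadratic form `q` on `(Λ1 + Λ2) ∩ P` given by
`q (λ1 + λ2) = σ λ1 λ2` (`λi ∈ Λi`). -/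
noncomputable def posIndPair {E : Type*} [AddCommGroup E] [Module ℝ E]
    (σ : E →ₗ[ℝ] E →ₗ[ℝ] ℝ) (P Λ1 Λ2 : Submodule ℝ E) : ℕ :=
  sSup {k | ∃ W : Submodule ℝ E, W ≤ (Λ1 ⊔ Λ2) ⊓ P ∧
    (∀ x ∈ W, x ≠ 0 → ∀ x1 ∈ Λ1, ∀ x2 ∈ Λ2, x = x1 + x2 → 0 < σ x1 x2) ∧
    Module.finrank ℝ W = k}

/-- The positive Maslov index of the triple `(Λ1, P, Λ2)` of Lagrangian subspaces:
`ind_P (Λ1, Λ2) = ind⁺ q + (dim (Λ1 ∩ P) + dim (Λ2 ∩ P)) / 2 - dim (Λ1 ∩ Λ2 ∩ P)`. -/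
noncomputable def maslovInd {E : Type*} [AddCommGroup E] [Module ℝ E]
    (σ : E →ₗ[ℝ] E →ₗ[ℝ] ℝ) (P Λ1 Λ2 : Submodule ℝ E) : ℚ :=
  (posIndPair σ P Λ1 Λ2 : ℚ)
    + ((Module.finrank ℝ ↥(Λ1 ⊓ P) : ℚ) + (Module.finrank ℝ ↥(Λ2 ⊓ P) : ℚ)) / 2
    - (Module.finrank ℝ ↥(Λ1 ⊓ Λ2 ⊓ P) : ℚ)

/-!
The subspaces `Λ1`, `Λ2`, `Λ1 ∩ Λ2` and `Λ1 + Λ2` all lie between `Γ` and `Γ^∠`, and for any such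
`A` the modular law gives `A ∩ Π^Γ = (A ∩ Π) + Γ`. Hence each of the three dimensions in the
Maslov index grows by the same amount `dim Γ - dim (Π ∩ Γ)`, which cancels in the combination
`½ + ½ - 1`. The form `q` vanishes on `Γ` and is invariant under translation by `Γ`, so a positive
subspace of `((Λ1 + Λ2) ∩ Π) + Γ` meets `Γ` trivially and can be replaced by one of the same
dimension inside `(Λ1 + Λ2) ∩ Π`. That `Π^Γ` is Lagrangian is again the modular law:
`(Π^Γ)^∠ = (Π + Γ) ∩ Γ^∠ = Π^Γ`.
-/

section ModularLattice

variable {α : Type*} [Lattice α] [IsModularLattice α]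

theorem inf_inf_sup_eq_of_le_of_le {a b c d : α} (hca : c ≤ a) (had : a ≤ d) :
    a ⊓ (b ⊓ d ⊔ c) = a ⊓ b ⊔ c := by
  rw [← inf_sup_assoc_of_le _ hca, ← inf_assoc, inf_right_comm, inf_eq_left.mpr had]

theorem exists_le_disjoint_sup_eq [BoundedOrder α] [ComplementedLattice α] {a b c : α}
    (h : a ≤ b ⊔ c) : ∃ d ≤ b, Disjoint d c ∧ d ⊔ c = a ⊔ c := by
  obtain ⟨d, hdisj, hsup⟩ := IsModularLattice.exists_disjoint_and_sup_eq
    (show b ⊓ c ≤ (a ⊔ c) ⊓ b from le_inf (inf_le_right.trans le_sup_right) inf_le_left)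
  have hdb : d ≤ b := (le_sup_right.trans hsup.le).trans inf_le_right
  refine ⟨d, hdb, disjoint_iff.mpr ?_, ?_⟩
  · rw [← hdisj.symm.eq_bot, ← inf_assoc, inf_eq_left.mpr hdb]
  · calc d ⊔ c = b ⊓ c ⊔ d ⊔ c := by
          rw [sup_assoc, sup_eq_right.mpr (show b ⊓ c ≤ d ⊔ c from inf_le_right.trans le_sup_right)]
      _ = (a ⊔ c) ⊓ b ⊔ c := by rw [hsup]
      _ = (a ⊔ c) ⊓ (b ⊔ c) := inf_sup_assoc_of_le _ le_sup_right
      _ = a ⊔ c := inf_eq_left.mpr (sup_le h le_sup_right)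

end ModularLattice

theorem Submodule.finrank_eq_of_disjoint_of_sup_eq {K V : Type*} [DivisionRing K]
    [AddCommGroup V] [Module K V] [FiniteDimensional K V] {U U' Γ : Submodule K V} (hU : Disjoint U Γ)
    (hU' : Disjoint U' Γ) (h : U ⊔ Γ = U' ⊔ Γ) : finrank K U = finrank K U' := by
  have e := Submodule.finrank_sup_add_finrank_inf_eq U Γ
  have e' := Submodule.finrank_sup_add_finrank_inf_eq U' Γ
  rw [hU.eq_bot, finrank_bot, h] at e
  rw [hU'.eq_bot, finrank_bot] at e'
  omega

theorem Submodule.finrank_inf_sup_add_finrank_inf {K V : Type*} [DivisionRing K]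
    [AddCommGroup V] [Module K V] [FiniteDimensional K V] {A P Γ : Submodule K V} (hΓ : Γ ≤ A) :
    finrank K ↥(A ⊓ P ⊔ Γ) + finrank K ↥(P ⊓ Γ) = finrank K ↥(A ⊓ P) + finrank K Γ := by
  rw [← Submodule.finrank_sup_add_finrank_inf_eq (A ⊓ P) Γ, inf_right_comm, inf_eq_right.mpr hΓ,
    inf_comm Γ]

section Symplectic

variable {E : Type*} [AddCommGroup E] [Module ℝ E] (σ : E →ₗ[ℝ] E →ₗ[ℝ] ℝ)

theorem skewCompl_anti {A B : Submodule ℝ E} (h : A ≤ B) : skewCompl σ B ≤ skewCompl σ A :=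
  fun _ hx y hy => hx y (h hy)

theorem skewCompl_sup (A B : Submodule ℝ E) :
    skewCompl σ (A ⊔ B) = skewCompl σ A ⊓ skewCompl σ B := by
  refine le_antisymm (le_inf (skewCompl_anti σ le_sup_left) (skewCompl_anti σ le_sup_right)) ?_
  rintro x ⟨hA, hB⟩ y hy
  obtain ⟨a, ha, b, hb, rfl⟩ := Submodule.mem_sup.mp hy
  rw [map_add, hA a ha, hB b hb, add_zero]

theorem skewCompl_eq_orthogonal (halt : ∀ x : E, σ x x = 0) (Γ : Submodule ℝ E) :
    skewCompl σ Γ = LinearMap.BilinForm.orthogonal σ Γ := by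
  ext x
  exact forall₂_congr fun y _ => LinearMap.BilinForm.IsAlt.eq_iff halt

variable [FiniteDimensional ℝ E] (halt : ∀ x : E, σ x x = 0)
  (hnondeg : ∀ x : E, (∀ y : E, σ x y = 0) → x = 0)
include halt hnondeg

theorem skewCompl_skewCompl (Γ : Submodule ℝ E) : skewCompl σ (skewCompl σ Γ) = Γ := by
  rw [skewCompl_eq_orthogonal σ halt, skewCompl_eq_orthogonal σ halt]
  have hrefl := LinearMap.BilinForm.IsAlt.isRefl halt
  exact LinearMap.BilinForm.orthogonal_orthogonal
    ⟨hnondeg, fun y hy => hnondeg y fun x => hrefl _ _ (hy x)⟩ hrefl Γ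

theorem skewCompl_inf (A B : Submodule ℝ E) :
    skewCompl σ (A ⊓ B) = skewCompl σ A ⊔ skewCompl σ B := by
  conv_lhs => rw [← skewCompl_skewCompl σ halt hnondeg A, ← skewCompl_skewCompl σ halt hnondeg B,
    ← skewCompl_sup]
  exact skewCompl_skewCompl σ halt hnondeg _

theorem IsLagrangian.inf_skewCompl_sup {P Γ : Submodule ℝ E} (hP : IsLagrangian σ P)
    (hΓ : Γ ≤ skewCompl σ Γ) : IsLagrangian σ (P ⊓ skewCompl σ Γ ⊔ Γ) := by
  rw [IsLagrangian, skewCompl_sup, skewCompl_inf σ halt hnondeg,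
    skewCompl_skewCompl σ halt hnondeg, ← hP, sup_comm P, sup_inf_assoc_of_le _ hΓ, sup_comm]

end Symplectic

section PositiveIndex

variable {E : Type*} [AddCommGroup E] [Module ℝ E] (σ : E →ₗ[ℝ] E →ₗ[ℝ] ℝ)

def IsPosDefOn (Λ1 Λ2 W : Submodule ℝ E) : Prop :=
  ∀ x ∈ W, x ≠ 0 → ∀ x1 ∈ Λ1, ∀ x2 ∈ Λ2, x = x1 + x2 → 0 < σ x1 x2

variable {σ} {Λ1 Λ2 W W' Γ : Submodule ℝ E}

theorem IsPosDefOn.disjoint (hW : IsPosDefOn σ Λ1 Λ2 W) (hΓ : Γ ≤ Λ1) : Disjoint W Γ := by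
  refine Submodule.disjoint_def.mpr fun x hxW hxΓ => ?_
  by_contra hx
  simpa using hW x hxW hx x (hΓ hxΓ) 0 Λ2.zero_mem (add_zero x).symm

theorem IsPosDefOn.of_le_sup (hW' : IsPosDefOn σ Λ1 Λ2 W') (hΓ1 : Γ ≤ Λ1)
    (hΓ2 : Γ ≤ skewCompl σ Λ2) (hW : W ≤ W' ⊔ Γ) (hWΓ : Disjoint W Γ) :
    IsPosDefOn σ Λ1 Λ2 W := by
  intro x hx hx0 x1 hx1 x2 hx2 hdec
  obtain ⟨w, hw, c, hc, rfl⟩ := Submodule.mem_sup.mp (hW hx)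
  have hw0 : w ≠ 0 := by
    rintro rfl
    exact hx0 (Submodule.disjoint_def.mp hWΓ _ hx (by simpa using hc))
  -- `q (w + c) = q w`: move `c` into the `Λ1`-component, where it pairs trivially with `Λ2`
  have hq := hW' w hw hw0 (x1 - c) (sub_mem hx1 (hΓ1 hc)) x2 hx2
    (by rw [sub_add_eq_add_sub, ← hdec, add_sub_cancel_right])
  rwa [map_sub, LinearMap.sub_apply, hΓ2 hc x2 hx2, sub_zero] at hq

variable [FiniteDimensional ℝ E]

theorem posIndPair_eq_of_inf_eq_sup {P P' : Submodule ℝ E} (hΓ1 : Γ ≤ Λ1)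
    (hΓ2 : Γ ≤ skewCompl σ Λ2) (h : (Λ1 ⊔ Λ2) ⊓ P' = (Λ1 ⊔ Λ2) ⊓ P ⊔ Γ) :
    posIndPair σ P Λ1 Λ2 = posIndPair σ P' Λ1 Λ2 := by
  unfold posIndPair
  congr 1
  ext k
  constructor
  · rintro ⟨W, hW, hWpos, rfl⟩
    exact ⟨W, h ▸ le_sup_of_le_left hW, hWpos, rfl⟩
  · rintro ⟨W', hW', hW'pos, rfl⟩
    have hW'Γ : Disjoint W' Γ := IsPosDefOn.disjoint hW'pos hΓ1
    obtain ⟨W, hWP, hWΓ, hsup⟩ := exists_le_disjoint_sup_eq (hW'.trans h.le)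
    exact ⟨W, hWP, IsPosDefOn.of_le_sup hW'pos hΓ1 hΓ2 (hsup ▸ le_sup_left) hWΓ,
      Submodule.finrank_eq_of_disjoint_of_sup_eq hWΓ hW'Γ hsup⟩

theorem maslovInd_eq_of_inf_eq_sup {P P' : Submodule ℝ E} (hΓ : Γ ≤ Λ1 ⊓ Λ2)
    (hpos : posIndPair σ P Λ1 Λ2 = posIndPair σ P' Λ1 Λ2) (h1 : Λ1 ⊓ P' = Λ1 ⊓ P ⊔ Γ)
    (h2 : Λ2 ⊓ P' = Λ2 ⊓ P ⊔ Γ) (h12 : Λ1 ⊓ Λ2 ⊓ P' = Λ1 ⊓ Λ2 ⊓ P ⊔ Γ) :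
    maslovInd σ P Λ1 Λ2 = maslovInd σ P' Λ1 Λ2 := by
  have e1 := Submodule.finrank_inf_sup_add_finrank_inf (P := P) (hΓ.trans inf_le_left)
  have e2 := Submodule.finrank_inf_sup_add_finrank_inf (P := P) (hΓ.trans inf_le_right)
  have e12 := Submodule.finrank_inf_sup_add_finrank_inf (P := P) hΓ
  rw [← h1] at e1
  rw [← h2] at e2
  rw [← h12] at e12
  qify at e1 e2 e12
  unfold maslovInd
  rw [hpos]
  linarith

end PositiveIndex

theorem stmt_11 {E : Type*} [AddCommGroup E] [Module ℝ E] [FiniteDimensional ℝ E]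
    (σ : E →ₗ[ℝ] E →ₗ[ℝ] ℝ)
    (halt : ∀ x : E, σ x x = 0)
    (hnondeg : ∀ x : E, (∀ y : E, σ x y = 0) → x = 0)
    (P Λ1 Λ2 : Submodule ℝ E)
    (hP : IsLagrangian σ P) (hΛ1 : IsLagrangian σ Λ1) (hΛ2 : IsLagrangian σ Λ2)
    (Γ : Submodule ℝ E) (hΓ : Γ ≤ Λ1 ⊓ Λ2) :
    IsLagrangian σ ((P ⊓ skewCompl σ Γ) ⊔ Γ) ∧
    maslovInd σ P Λ1 Λ2 = maslovInd σ ((P ⊓ skewCompl σ Γ) ⊔ Γ) Λ1 Λ2 := by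
  have hΓ1 : Γ ≤ Λ1 := hΓ.trans inf_le_left
  have hΓ2 : Γ ≤ Λ2 := hΓ.trans inf_le_right
  have hΛ1Γ : Λ1 ≤ skewCompl σ Γ := hΛ1.le.trans (skewCompl_anti σ hΓ1)
  have hΛ2Γ : Λ2 ≤ skewCompl σ Γ := hΛ2.le.trans (skewCompl_anti σ hΓ2)
  have hinf : ∀ A, Γ ≤ A → A ≤ skewCompl σ Γ → A ⊓ (P ⊓ skewCompl σ Γ ⊔ Γ) = A ⊓ P ⊔ Γ :=
    fun _ hA hA' => inf_inf_sup_eq_of_le_of_le hA hA'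
  refine ⟨hP.inf_skewCompl_sup σ halt hnondeg (hΓ1.trans hΛ1Γ), ?_⟩
  exact maslovInd_eq_of_inf_eq_sup hΓ
    (posIndPair_eq_of_inf_eq_sup hΓ1 (hΓ2.trans hΛ2.le)
      (hinf _ (hΓ1.trans le_sup_left) (sup_le hΛ1Γ hΛ2Γ)))
    (hinf _ hΓ1 hΛ1Γ) (hinf _ hΓ2 hΛ2Γ) (hinf _ hΓ (inf_le_left.trans hΛ1Γ))
end

section
/- Let Σ be a symplectic vector space of dimension 2n and let Λ0, Δ be Lagrangian subspaces with Λ0 ∩ Δ = {0}, so that Σ = Λ0 ⊕ Δ. Call a linear map T : Λ0 → Δ symmetric if σ(T x, y) = σ(T y, x) for all x, y ∈ Λ0; then the graph gr T = {x + T x : x ∈ Λ0} is a Lagrangian subspace of Σ. For every countable set S of Lagrangian subspaces of Σ, the set of symmetric linear maps T : Λ0 → Δ such that gr T ∩ Λ = {0} for every Λ ∈ S is dense in the finite-dimensional space of symmetric linear maps from Λ0 to Δ (with its standard topology). In particular, there exists a Lagrangian subspace of Σ that intersects every element of S trivially. -/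
/-! The symmetric maps `T : Λ0 → Δ` whose graph meets a fixed Lagrangian `Λ` nontrivially form
a closed set, which meets every line `T + t • J` with `σ (J ·) ·` definite in only finitely many
points. So its complement is open and dense, and Baire's theorem applies to the countable
family `S`. -/

open Module Submodule

section Isotropic

variable {E : Type*} [AddCommGroup E] [Module ℝ E] {σ : E →ₗ[ℝ] E →ₗ[ℝ] ℝ}

def IsIsotropic (σ : E →ₗ[ℝ] E →ₗ[ℝ] ℝ) (Γ : Submodule ℝ E) : Prop :=
  Γ ≤ skewCompl σ Γ

theorem IsIsotropic.apply_eq_zero {Γ : Submodule ℝ E} (h : IsIsotropic σ Γ) {x y : E}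
    (hx : x ∈ Γ) (hy : y ∈ Γ) : σ x y = 0 :=
  h hx y hy

theorem IsLagrangian.isIsotropic {Λ : Submodule ℝ E} (h : IsLagrangian σ Λ) :
    IsIsotropic σ Λ :=
  h.le

variable [FiniteDimensional ℝ E]

theorem finrank_skewCompl (halt : σ.IsAlt)
    (hnondeg : ∀ x : E, (∀ y : E, σ x y = 0) → x = 0) (Γ : Submodule ℝ E) :
    finrank ℝ (skewCompl σ Γ) = finrank ℝ E - finrank ℝ Γ := by
  have : skewCompl σ Γ = LinearMap.BilinForm.orthogonal σ Γ := by
    ext x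
    exact ⟨fun h y hy ↦ halt.isRefl x y (h y hy), fun h y hy ↦ halt.isRefl y x (h y hy)⟩
  rw [this]
  exact LinearMap.BilinForm.finrank_orthogonal
    (halt.isRefl.nondegenerate_iff_separatingLeft.2 hnondeg) Γ

theorem IsLagrangian.two_mul_finrank (halt : σ.IsAlt)
    (hnondeg : ∀ x : E, (∀ y : E, σ x y = 0) → x = 0) {Λ : Submodule ℝ E}
    (h : IsLagrangian σ Λ) :
    2 * finrank ℝ Λ = finrank ℝ E := by
  have := finrank_skewCompl halt hnondeg Λ
  rw [← h] at this
  have := Submodule.finrank_le Λ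
  omega

theorem IsIsotropic.isLagrangian (halt : σ.IsAlt)
    (hnondeg : ∀ x : E, (∀ y : E, σ x y = 0) → x = 0) {Γ : Submodule ℝ E}
    (h : IsIsotropic σ Γ)
    (hdim : 2 * finrank ℝ Γ = finrank ℝ E) : IsLagrangian σ Γ :=
  Submodule.eq_of_le_of_finrank_le h (by rw [finrank_skewCompl halt hnondeg]; omega)

theorem IsLagrangian.sup_eq_top (halt : σ.IsAlt)
    (hnondeg : ∀ x : E, (∀ y : E, σ x y = 0) → x = 0) {Λ0 Δ : Submodule ℝ E}
    (hΛ0 : IsLagrangian σ Λ0) (hΔ : IsLagrangian σ Δ) (hdisj : Λ0 ⊓ Δ = ⊥) : Λ0 ⊔ Δ = ⊤ := by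
  apply Submodule.eq_top_of_finrank_eq
  have := Submodule.finrank_sup_add_finrank_inf_eq Λ0 Δ
  rw [hdisj, finrank_bot, add_zero] at this
  have := IsLagrangian.two_mul_finrank halt hnondeg hΛ0
  have := IsLagrangian.two_mul_finrank halt hnondeg hΔ
  omega

end Isotropic

section Graph

variable {E : Type*} [AddCommGroup E] [Module ℝ E] {σ : E →ₗ[ℝ] E →ₗ[ℝ] ℝ}
  {Λ0 Δ : Submodule ℝ E}

def graphSubmodule (T : Λ0 →ₗ[ℝ] Δ) : Submodule ℝ E :=
  LinearMap.range (Λ0.subtype + Δ.subtype ∘ₗ T)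

theorem mem_graphSubmodule {T : Λ0 →ₗ[ℝ] Δ} {w : E} :
    w ∈ graphSubmodule T ↔ ∃ x : Λ0, (x : E) + T x = w := by
  simp [graphSubmodule]

theorem add_apply_eq_zero_iff_of_inf_eq_bot (hdisj : Λ0 ⊓ Δ = ⊥) (T : Λ0 →ₗ[ℝ] Δ) (x : Λ0) :
    (x : E) + T x = 0 ↔ x = 0 := by
  refine ⟨fun h ↦ ?_, fun h ↦ by simp [h]⟩
  have hx : (x : E) ∈ Λ0 ⊓ Δ := ⟨x.2, eq_neg_of_add_eq_zero_left h ▸ neg_mem (T x).2⟩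
  simpa [hdisj] using hx

theorem graphSubmodule_inf_ne_bot_iff (hdisj : Λ0 ⊓ Δ = ⊥) (T : Λ0 →ₗ[ℝ] Δ)
    (Λ : Submodule ℝ E) :
    graphSubmodule T ⊓ Λ ≠ ⊥ ↔ ∃ x : Λ0, x ≠ 0 ∧ (x : E) + T x ∈ Λ := by
  simp only [Submodule.ne_bot_iff, Submodule.mem_inf, mem_graphSubmodule]
  constructor
  · rintro ⟨_, ⟨⟨x, rfl⟩, hxΛ⟩, hx0⟩
    exact ⟨x, fun h ↦ hx0 (by simp [h]), hxΛ⟩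
  · rintro ⟨x, hx0, hxΛ⟩
    exact ⟨_, ⟨⟨x, rfl⟩, hxΛ⟩, mt (add_apply_eq_zero_iff_of_inf_eq_bot hdisj T x).1 hx0⟩

theorem finrank_graphSubmodule [FiniteDimensional ℝ E] (hdisj : Λ0 ⊓ Δ = ⊥)
    (T : Λ0 →ₗ[ℝ] Δ) : finrank ℝ (graphSubmodule T) = finrank ℝ Λ0 := by
  refine LinearMap.finrank_range_of_inj fun x y hxy ↦ ?_
  rw [← sub_eq_zero, ← add_apply_eq_zero_iff_of_inf_eq_bot hdisj T]
  simp only [LinearMap.add_apply, LinearMap.comp_apply, Submodule.subtype_apply] at hxy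
  simp only [Submodule.coe_sub, map_sub]
  rw [sub_add_sub_comm, hxy, sub_self]

theorem apply_add_apply_add (halt : σ.IsAlt) (hΛ0 : IsIsotropic σ Λ0) (hΔ : IsIsotropic σ Δ)
    (U V : Λ0 →ₗ[ℝ] Δ) (a b : Λ0) :
    σ (a + U a) (b + V b) = σ (U a) b - σ (V b) a := by
  simp only [map_add, LinearMap.add_apply, hΛ0.apply_eq_zero a.2 b.2,
    hΔ.apply_eq_zero (U a).2 (V b).2, ← halt.neg (V b : E) a]
  ring

theorem isLagrangian_graphSubmodule [FiniteDimensional ℝ E] (halt : σ.IsAlt)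
    (hnondeg : ∀ x : E, (∀ y : E, σ x y = 0) → x = 0)
    (hΛ0 : IsLagrangian σ Λ0) (hΔ : IsLagrangian σ Δ) (hdisj : Λ0 ⊓ Δ = ⊥)
    (T : Λ0 →ₗ[ℝ] Δ) (hT : ∀ x y : Λ0, σ (T x) y = σ (T y) x) :
    IsLagrangian σ (graphSubmodule T) := by
  refine IsIsotropic.isLagrangian halt hnondeg ?_ ?_
  · rintro _ ⟨a, rfl⟩ _ ⟨b, rfl⟩
    simpa [hT] using apply_add_apply_add halt hΛ0.isIsotropic hΔ.isIsotropic T T a b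
  · rw [finrank_graphSubmodule hdisj, IsLagrangian.two_mul_finrank halt hnondeg hΛ0]

end Graph

section Transversal

variable {E : Type*} [AddCommGroup E] [Module ℝ E] [FiniteDimensional ℝ E]
  {σ : E →ₗ[ℝ] E →ₗ[ℝ] ℝ} {Λ0 Δ : Submodule ℝ E}

theorem bijective_compl₁₂_subtype (halt : σ.IsAlt)
    (hnondeg : ∀ x : E, (∀ y : E, σ x y = 0) → x = 0)
    (hΛ0 : IsLagrangian σ Λ0) (hΔ : IsLagrangian σ Δ) (hdisj : Λ0 ⊓ Δ = ⊥) :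
    Function.Bijective (σ.compl₁₂ Δ.subtype Λ0.subtype) := by
  have hinj : Function.Injective (σ.compl₁₂ Δ.subtype Λ0.subtype) := by
    rw [← LinearMap.ker_eq_bot, Submodule.eq_bot_iff]
    intro d hd
    refine Subtype.ext (hnondeg d fun y ↦ ?_)
    have hy : y ∈ Λ0 ⊔ Δ := by
      rw [IsLagrangian.sup_eq_top halt hnondeg hΛ0 hΔ hdisj]
      exact Submodule.mem_top
    obtain ⟨a, ha, c, hc, rfl⟩ := Submodule.mem_sup.1 hy
    rw [map_add, hΔ.isIsotropic.apply_eq_zero d.2 hc, add_zero]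
    exact LinearMap.congr_fun hd ⟨a, ha⟩
  refine ⟨hinj, (LinearMap.injective_iff_surjective_of_finrank_eq_finrank ?_).1 hinj⟩
  have := IsLagrangian.two_mul_finrank halt hnondeg hΛ0
  have := IsLagrangian.two_mul_finrank halt hnondeg hΔ
  rw [Subspace.dual_finrank_eq]
  omega

theorem exists_apply_eq_of_isLagrangian (halt : σ.IsAlt)
    (hnondeg : ∀ x : E, (∀ y : E, σ x y = 0) → x = 0)
    (hΛ0 : IsLagrangian σ Λ0) (hΔ : IsLagrangian σ Δ) (hdisj : Λ0 ⊓ Δ = ⊥)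
    (B : Λ0 →ₗ[ℝ] Λ0 →ₗ[ℝ] ℝ) : ∃ J : Λ0 →ₗ[ℝ] Δ, ∀ x y : Λ0, σ (J x) y = B x y := by
  let e := LinearEquiv.ofBijective _ (bijective_compl₁₂_subtype halt hnondeg hΛ0 hΔ hdisj)
  exact ⟨e.symm.toLinearMap ∘ₗ B, fun x y ↦ LinearMap.congr_fun (e.apply_symm_apply (B x)) y⟩

end Transversal

theorem exists_symm_anisotropic_bilin (V : Type*) [AddCommGroup V] [Module ℝ V]
    [FiniteDimensional ℝ V] :
    ∃ B : V →ₗ[ℝ] V →ₗ[ℝ] ℝ, (∀ x y, B x y = B y x) ∧ ∀ x, x ≠ 0 → B x x ≠ 0 := by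
  let e := (finBasis ℝ V).equivFun
  refine ⟨(Matrix.toLinearMap₂' ℝ 1).compl₁₂ e.toLinearMap e.toLinearMap, fun x y ↦ ?_,
    fun x hx ↦ ?_⟩
  · simp [Matrix.toLinearMap₂'_apply', dotProduct_comm]
  · simpa [Matrix.toLinearMap₂'_apply', dotProduct_self_eq_zero] using hx

/-- Nonzero vectors `x t ∈ Λ0` with `x t + (T + t • J) (x t) ∈ Λ` for distinct `t` are
orthogonal for the anisotropic form `σ (J ·) ·`, hence linearly independent. -/
theorem finite_setOf_graphSubmodule_add_smul_inf_ne_bot {E : Type*} [AddCommGroup E]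
    [Module ℝ E] [FiniteDimensional ℝ E] {σ : E →ₗ[ℝ] E →ₗ[ℝ] ℝ} {Λ0 Δ Λ : Submodule ℝ E}
    (halt : σ.IsAlt) (hΛ0 : IsIsotropic σ Λ0) (hΔ : IsIsotropic σ Δ) (hΛ : IsIsotropic σ Λ)
    (hdisj : Λ0 ⊓ Δ = ⊥) {T J : Λ0 →ₗ[ℝ] Δ} (hT : ∀ x y : Λ0, σ (T x) y = σ (T y) x)
    (hJ : ∀ x y : Λ0, σ (J x) y = σ (J y) x) (hJ₀ : ∀ x : Λ0, x ≠ 0 → σ (J x) x ≠ 0) :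
    {t : ℝ | graphSubmodule (T + t • J) ⊓ Λ ≠ ⊥}.Finite := by
  rw [← Set.finite_coe_iff]
  choose x hx0 hxΛ using fun t : {t : ℝ | graphSubmodule (T + t • J) ⊓ Λ ≠ ⊥} ↦
    (graphSubmodule_inf_ne_bot_iff hdisj _ Λ).1 t.2
  let P : LinearMap.BilinForm ℝ Λ0 := σ.compl₁₂ (Δ.subtype ∘ₗ J) Λ0.subtype
  have hortho : P.iIsOrtho x := by
    intro t s hts
    have h := apply_add_apply_add halt hΛ0 hΔ (T + t.1 • J) (T + s.1 • J) (x t) (x s)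
    rw [hΛ.apply_eq_zero (hxΛ t) (hxΛ s)] at h
    simp only [LinearMap.add_apply, LinearMap.smul_apply, Submodule.coe_add,
      Submodule.coe_smul, map_add, map_smul, smul_eq_mul, hT (x s), hJ (x s)] at h
    have hts' : t.1 - s.1 ≠ 0 := sub_ne_zero.2 (Subtype.coe_injective.ne hts)
    have key : (t.1 - s.1) * σ (J (x t)) (x s) = 0 := by linear_combination -h
    exact (mul_eq_zero.1 key).resolve_left hts'
  exact (LinearMap.BilinForm.linearIndependent_of_iIsOrtho hortho fun t ↦ hJ₀ _ (hx0 t)).finite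

theorem IsClosed.baireSpace {X : Type*} [PseudoMetricSpace X] [CompleteSpace X] {s : Set X}
    (hs : IsClosed s) : BaireSpace s :=
  have := hs.completeSpace_coe
  inferInstance

section Topology

abbrev SymmMap {E : Type*} [NormedAddCommGroup E] [NormedSpace ℝ E]
    (σ : E →ₗ[ℝ] E →ₗ[ℝ] ℝ) (Λ0 Δ : Submodule ℝ E) : Type _ :=
  {T : Λ0 →L[ℝ] Δ // ∀ x y : Λ0, σ (T x) y = σ (T y) x}

variable {E : Type*} [NormedAddCommGroup E] [NormedSpace ℝ E] [FiniteDimensional ℝ E]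
  {σ : E →ₗ[ℝ] E →ₗ[ℝ] ℝ} {Λ0 Δ : Submodule ℝ E}

theorem isClosed_setOf_symm :
    IsClosed {T : Λ0 →L[ℝ] Δ | ∀ x y : Λ0, σ (T x) y = σ (T y) x} := by
  have hc (x y : Λ0) : Continuous fun T : Λ0 →L[ℝ] Δ ↦ σ (T x) y :=
    ((σ.flip y).continuous_of_finiteDimensional.comp continuous_subtype_val).comp
      (continuous_eval_const x)
  simp only [Set.ofPred_forall]
  exact isClosed_iInter fun x ↦ isClosed_iInter fun y ↦ isClosed_eq (hc x y) (hc y x)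

-- Instance search does not identify the uniformity of `Λ0 →L[ℝ] Δ` with the operator-norm one,
-- so the complete metric space is named explicitly.
instance : BaireSpace (SymmMap σ Λ0 Δ) :=
  IsClosed.baireSpace (X := Λ0 →L[ℝ] Δ) isClosed_setOf_symm

/-- The set is the projection of a closed subset of `(Λ0 →L[ℝ] Δ) × sphere 0 1` along the
compact factor. -/
theorem isClosed_setOf_graphSubmodule_inf_ne_bot (hdisj : Λ0 ⊓ Δ = ⊥) (Λ : Submodule ℝ E) :
    IsClosed {T : Λ0 →L[ℝ] Δ | graphSubmodule (T : Λ0 →ₗ[ℝ] Δ) ⊓ Λ ≠ ⊥} := by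
  have hproj : {T : Λ0 →L[ℝ] Δ | graphSubmodule (T : Λ0 →ₗ[ℝ] Δ) ⊓ Λ ≠ ⊥} =
      Prod.fst '' {p : (Λ0 →L[ℝ] Δ) × Metric.sphere (0 : Λ0) 1 |
        (p.2 : E) + p.1 p.2 ∈ Λ} := by
    ext T
    rw [Set.mem_ofPred_eq, graphSubmodule_inf_ne_bot_iff hdisj]
    constructor
    · rintro ⟨x, hx0, hxΛ⟩
      refine ⟨(T, ⟨‖x‖⁻¹ • x, by
        rw [mem_sphere_zero_iff_norm, norm_smul, norm_inv, norm_norm,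
          inv_mul_cancel₀ (norm_ne_zero_iff.2 hx0)]⟩), ?_, rfl⟩
      simpa [smul_add] using Λ.smul_mem ‖x‖⁻¹ hxΛ
    · rintro ⟨⟨T, x, hx1⟩, hxΛ, rfl⟩
      exact ⟨x, ne_zero_of_mem_sphere one_ne_zero ⟨x, hx1⟩, hxΛ⟩
  rw [hproj]
  refine isClosedMap_fst_of_compactSpace _ (Λ.closed_of_finiteDimensional.preimage ?_)
  fun_prop

theorem dense_setOf_graphSubmodule_inf_eq_bot (halt : σ.IsAlt) (hΛ0 : IsIsotropic σ Λ0)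
    (hΔ : IsIsotropic σ Δ) (hdisj : Λ0 ⊓ Δ = ⊥) {J : Λ0 →L[ℝ] Δ}
    (hJ : ∀ x y : Λ0, σ (J x) y = σ (J y) x) (hJ₀ : ∀ x : Λ0, x ≠ 0 → σ (J x) x ≠ 0)
    {Λ : Submodule ℝ E} (hΛ : IsIsotropic σ Λ) :
    Dense {T : SymmMap σ Λ0 Δ | graphSubmodule (T.1 : Λ0 →ₗ[ℝ] Δ) ⊓ Λ = ⊥} := by
  intro T
  let line : ℝ → SymmMap σ Λ0 Δ := fun t ↦ ⟨T.1 + t • J, fun x y ↦ by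
    simp only [add_apply, smul_apply, Submodule.coe_add,
      Submodule.coe_smul, map_add, map_smul, LinearMap.add_apply, LinearMap.smul_apply,
      T.2 x y, hJ x y]⟩
  have hbad := finite_setOf_graphSubmodule_add_smul_inf_ne_bot halt hΛ0 hΔ hΛ hdisj T.2 hJ hJ₀
  have h0 : (0 : ℝ) ∈ closure {t | graphSubmodule (line t).1.toLinearMap ⊓ Λ = ⊥} := by
    simpa [line, Set.compl_ofPred] using hbad.countable.dense_compl ℝ 0
  have := map_mem_closure (t := {T : SymmMap σ Λ0 Δ | graphSubmodule T.1.toLinearMap ⊓ Λ = ⊥})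
    (by fun_prop : Continuous line) h0 fun _ ↦ id
  rwa [show line 0 = T from Subtype.ext (by ext; simp [line])] at this

theorem dense_setOf_forall_graphSubmodule_inf_eq_bot (halt : σ.IsAlt)
    (hΛ0 : IsIsotropic σ Λ0) (hΔ : IsIsotropic σ Δ) (hdisj : Λ0 ⊓ Δ = ⊥) {J : Λ0 →L[ℝ] Δ}
    (hJ : ∀ x y : Λ0, σ (J x) y = σ (J y) x) (hJ₀ : ∀ x : Λ0, x ≠ 0 → σ (J x) x ≠ 0)
    {S : Set (Submodule ℝ E)} (hS : S.Countable) (hSiso : ∀ Λ ∈ S, IsIsotropic σ Λ) :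
    Dense {T : SymmMap σ Λ0 Δ | ∀ Λ ∈ S, graphSubmodule (T.1 : Λ0 →ₗ[ℝ] Δ) ⊓ Λ = ⊥} := by
  have hinter : {T : SymmMap σ Λ0 Δ | ∀ Λ ∈ S, graphSubmodule (T.1 : Λ0 →ₗ[ℝ] Δ) ⊓ Λ = ⊥} =
      ⋂ Λ ∈ S, {T | graphSubmodule (T.1 : Λ0 →ₗ[ℝ] Δ) ⊓ Λ = ⊥} := by
    ext
    simp
  rw [hinter]
  refine dense_biInter_of_isOpen (fun Λ _ ↦ ?_) hS fun Λ hΛ ↦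
    dense_setOf_graphSubmodule_inf_eq_bot halt hΛ0 hΔ hdisj hJ hJ₀ (hSiso Λ hΛ)
  have hopen := (isClosed_setOf_graphSubmodule_inf_ne_bot hdisj Λ).isOpen_compl
  simpa [Set.compl_ofPred] using hopen.preimage continuous_subtype_val

end Topology

theorem stmt_16_general {E : Type*} [NormedAddCommGroup E] [NormedSpace ℝ E]
    [FiniteDimensional ℝ E]
    (σ : E →ₗ[ℝ] E →ₗ[ℝ] ℝ)
    (halt : ∀ x : E, σ x x = 0)
    (hnondeg : ∀ x : E, (∀ y : E, σ x y = 0) → x = 0)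
    (Λ0 Δ : Submodule ℝ E)
    (hΛ0 : IsLagrangian σ Λ0) (hΔ : IsLagrangian σ Δ)
    (hdisj : Λ0 ⊓ Δ = ⊥)
    (S : Set (Submodule ℝ E)) (hS : S.Countable)
    (hSL : ∀ Λ ∈ S, IsLagrangian σ Λ) :
    (∀ T : ↥Λ0 →L[ℝ] ↥Δ, (∀ x y : ↥Λ0, σ ↑(T x) ↑y = σ ↑(T y) ↑x) →
      IsLagrangian σ
        (LinearMap.range (Λ0.subtype + Δ.subtype ∘ₗ (T : ↥Λ0 →ₗ[ℝ] ↥Δ)))) ∧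
    Dense {T : {T : ↥Λ0 →L[ℝ] ↥Δ // ∀ x y : ↥Λ0, σ ↑(T x) ↑y = σ ↑(T y) ↑x} |
      ∀ Λ ∈ S,
        LinearMap.range (Λ0.subtype + Δ.subtype ∘ₗ (T.1 : ↥Λ0 →ₗ[ℝ] ↥Δ)) ⊓ Λ = ⊥} ∧
    ∃ Λ' : Submodule ℝ E, IsLagrangian σ Λ' ∧ ∀ Λ ∈ S, Λ' ⊓ Λ = ⊥ := by
  have hgraph (T : Λ0 →L[ℝ] Δ) (hT : ∀ x y : Λ0, σ (T x) y = σ (T y) x) :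
      IsLagrangian σ (graphSubmodule (T : Λ0 →ₗ[ℝ] Δ)) :=
    isLagrangian_graphSubmodule halt hnondeg hΛ0 hΔ hdisj T hT
  obtain ⟨B, hBsymm, hB₀⟩ := exists_symm_anisotropic_bilin Λ0
  obtain ⟨J, hJB⟩ := exists_apply_eq_of_isLagrangian halt hnondeg hΛ0 hΔ hdisj B
  have hdense := dense_setOf_forall_graphSubmodule_inf_eq_bot halt hΛ0.isIsotropic
    hΔ.isIsotropic hdisj (J := LinearMap.toContinuousLinearMap J)
    (by simpa [hJB] using hBsymm) (by simpa [hJB] using hB₀) hS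
    fun Λ hΛ ↦ (hSL Λ hΛ).isIsotropic
  have : Nonempty (SymmMap σ Λ0 Δ) := ⟨⟨0, by simp⟩⟩
  obtain ⟨T, hT⟩ := hdense.nonempty
  exact ⟨hgraph, hdense, _, hgraph T.1 T.2, hT⟩

theorem stmt_16 {E : Type*} [NormedAddCommGroup E] [NormedSpace ℝ E]
    [FiniteDimensional ℝ E] {n : ℕ}
    (σ : E →ₗ[ℝ] E →ₗ[ℝ] ℝ)
    (halt : ∀ x : E, σ x x = 0)
    (hnondeg : ∀ x : E, (∀ y : E, σ x y = 0) → x = 0)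
    (hdim : Module.finrank ℝ E = 2 * n)
    (Λ0 Δ : Submodule ℝ E)
    (hΛ0 : IsLagrangian σ Λ0) (hΔ : IsLagrangian σ Δ)
    (hdisj : Λ0 ⊓ Δ = ⊥)
    (S : Set (Submodule ℝ E)) (hS : S.Countable)
    (hSL : ∀ Λ ∈ S, IsLagrangian σ Λ) :
    (∀ T : ↥Λ0 →L[ℝ] ↥Δ, (∀ x y : ↥Λ0, σ ↑(T x) ↑y = σ ↑(T y) ↑x) →
      IsLagrangian σ
        (LinearMap.range (Λ0.subtype + Δ.subtype ∘ₗ (T : ↥Λ0 →ₗ[ℝ] ↥Δ)))) ∧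
    Dense {T : {T : ↥Λ0 →L[ℝ] ↥Δ // ∀ x y : ↥Λ0, σ ↑(T x) ↑y = σ ↑(T y) ↑x} |
      ∀ Λ ∈ S,
        LinearMap.range (Λ0.subtype + Δ.subtype ∘ₗ (T.1 : ↥Λ0 →ₗ[ℝ] ↥Δ)) ⊓ Λ = ⊥} ∧
    ∃ Λ' : Submodule ℝ E, IsLagrangian σ Λ' ∧ ∀ Λ ∈ S, Λ' ⊓ Λ = ⊥ :=
  stmt_16_general σ halt hnondeg Λ0 Δ hΛ0 hΔ hdisj S hS hSL
end
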